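/- Identifiability of the single-component Langmuir model: if N₁, K₁, N₂, K₂ > 0 and N₁·K₁·c/(1 + K₁·c) = N₂·K₂·c/(1 + K₂·c) for all c > 0, then K₁ = K₂ and N₁ = N₂. -/
import Mathlib

theorem langmuir_identifiable (N₁ K₁ N₂ K₂ : ℝ)
    (hN₁ : 0 < N₁) (hK₁ : 0 < K₁) (hN₂ : 0 < N₂) (hK₂ : 0 < K₂)
    (h : ∀ c : ℝ, 0 < c →
      N₁ * K₁ * c / (1 + K₁ * c) = N₂ * K₂ * c / (1 + K₂ * c)) :
    K₁ = K₂ ∧ N₁ = N₂ := by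
  have h1 := h 1 one_pos
  have h2 := h 2 two_pos
  have d1 : (0:ℝ) < 1 + K₁ * 1 := by nlinarith
  have d2 : (0:ℝ) < 1 + K₂ * 1 := by nlinarith
  have d3 : (0:ℝ) < 1 + K₁ * 2 := by nlinarith
  have d4 : (0:ℝ) < 1 + K₂ * 2 := by nlinarith
  have e1 : N₁ * K₁ * 1 * (1 + K₂ * 1) = N₂ * K₂ * 1 * (1 + K₁ * 1) := by
    field_simp at h1; linarith
  have e2 : N₁ * K₁ * 2 * (1 + K₂ * 2) = N₂ * K₂ * 2 * (1 + K₁ * 2) := by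
    field_simp at h2; linarith
  have hK : K₁ = K₂ := by nlinarith [mul_pos hN₁ hK₁, mul_pos hN₂ hK₂]
  refine ⟨hK, ?_⟩
  subst hK
  nlinarith
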